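/- For polygonal curves P, Q : [0,1] → ℝ^d, the 1-Fréchet distance equals the weak Fréchet distance: δ_1F(P,Q) = δ_wF(P,Q). Equivalently, for every ε ≥ 0, there exists a single connected component of F_ε(P,Q) covering both parameter spaces if and only if δ_wF(P,Q) ≤ ε. -/

import Mathlib

open Set Metric

noncomputable section

/-- The free space of two curves `P, Q : ℝ → ℝ^d` (restricted to the parameter
domain `[0,1] × [0,1]`) at distance threshold `ε`. -/
def freeSpace (d : ℕ) (P Q : ℝ → EuclideanSpace ℝ (Fin d)) (ε : ℝ) : Set (ℝ × ℝ) :=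
  {p | p ∈ Icc (0:ℝ) 1 ×ˢ Icc (0:ℝ) 1 ∧ ‖P p.1 - Q p.2‖ ≤ ε}

/-- A subset of `[0,1] × [0,1]` covers both parameter spaces if both of its
coordinate projections equal `[0,1]`. -/
def CoversBoth (S : Set (ℝ × ℝ)) : Prop :=
  Prod.fst '' S = Icc (0:ℝ) 1 ∧ Prod.snd '' S = Icc (0:ℝ) 1

/-- `c` is a connected component of the set `F`. -/
def IsComponentOf (F c : Set (ℝ × ℝ)) : Prop :=
  ∃ x ∈ F, c = connectedComponentIn F x

/-- The `k`-Fréchet distance: the infimum over all `ε ≥ 0` such that at most `k`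
connected components of the free space cover both parameter spaces. -/
def kFrechetDist (d : ℕ) (k : ℕ) (P Q : ℝ → EuclideanSpace ℝ (Fin d)) : ℝ :=
  sInf {ε : ℝ | 0 ≤ ε ∧ ∃ S : Set (Set (ℝ × ℝ)),
    (∀ c ∈ S, IsComponentOf (freeSpace d P Q ε) c) ∧ S.Finite ∧ S.ncard ≤ k ∧
    CoversBoth (⋃₀ S)}

/-- A reparametrization: a continuous surjection of `[0,1]` onto itself. -/
def IsReparam (σ : ℝ → ℝ) : Prop :=
  ContinuousOn σ (Icc 0 1) ∧ σ '' Icc (0:ℝ) 1 = Icc (0:ℝ) 1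

/-- The weak Fréchet distance. -/
def weakFrechetDist (d : ℕ) (P Q : ℝ → EuclideanSpace ℝ (Fin d)) : ℝ :=
  sInf {r : ℝ | ∃ σ τ : ℝ → ℝ, IsReparam σ ∧ IsReparam τ ∧
    r = ⨆ t : Icc (0:ℝ) 1, ‖P (σ ↑t) - Q (τ ↑t)‖}

/-- An orientation-preserving homeomorphism of `[0,1]`: a continuous bijection of
`[0,1]` onto itself fixing the endpoints. -/
def IsOrientedHomeo (σ : ℝ → ℝ) : Prop :=
  ContinuousOn σ (Icc 0 1) ∧ Set.BijOn σ (Icc (0:ℝ) 1) (Icc (0:ℝ) 1) ∧ σ 0 = 0 ∧ σ 1 = 1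

/-- The (strong) Fréchet distance. -/
def frechetDist (d : ℕ) (P Q : ℝ → EuclideanSpace ℝ (Fin d)) : ℝ :=
  sInf {r : ℝ | ∃ σ : ℝ → ℝ, IsOrientedHomeo σ ∧
    r = ⨆ t : Icc (0:ℝ) 1, ‖P ↑t - Q (σ ↑t)‖}

/-- The Hausdorff distance between the images of the two curves. -/
def hausdorffD (d : ℕ) (P Q : ℝ → EuclideanSpace ℝ (Fin d)) : ℝ :=
  Metric.hausdorffDist (P '' Icc (0:ℝ) 1) (Q '' Icc (0:ℝ) 1)

/-- `P` is affine on the interval `[a,b]`: it agrees there with an affine map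
`s ↦ u + s • v`. -/
def IsAffineOn {d : ℕ} (P : ℝ → EuclideanSpace ℝ (Fin d)) (a b : ℝ) : Prop :=
  ∃ u v : EuclideanSpace ℝ (Fin d), ∀ s ∈ Icc a b, P s = u + s • v

/-- `P` is a polygonal curve with `n` segments: it is continuous on `[0,1]` and
there is a partition `0 = s_0 < s_1 < ⋯ < s_n = 1` such that `P` is affine on each
subinterval `[s_{i-1}, s_i]`. -/
def IsPolygonal (d n : ℕ) (P : ℝ → EuclideanSpace ℝ (Fin d)) : Prop :=
  ContinuousOn P (Icc 0 1) ∧ ∃ s : Fin (n + 1) → ℝ,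
    s 0 = 0 ∧ s (Fin.last n) = 1 ∧ StrictMono s ∧
    ∀ i : Fin n, IsAffineOn P (s i.castSucc) (s i.succ)

/-!
If a connected set `E ⊆ F_ε` covers both parameter spaces, then for every `η > 0` it lies in the
open set `{(s, t) | ‖P s - Q t‖ < ε + η}` (parameters clamped to `[0,1]`, so that this makes sense
in the whole plane). The component of that open set containing `E` is path-connected; a path in it
through points of `E` on the four sides of the square, clamped back and read coordinatewise, gives
two reparametrizations witnessing `δ_wF ≤ ε + η`.

Conversely, reparametrizations of width below `ε + η` trace connected covering sets in `F_{ε+η}`.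
The components of `F_{ε+η}` through a cluster point of these sets still cover both parameter
spaces, and as `η → 0` they decrease; being compact and connected, their intersection is a
connected subset of `F_ε` that covers both parameter spaces.
-/

open Filter

section Topology

variable {X : Type*} [TopologicalSpace X]

theorem IsClosed.connectedComponentIn {F : Set X} (hF : IsClosed F) (x : X) :
    IsClosed (connectedComponentIn F x) := by
  by_cases hx : x ∈ F
  · exact closure_subset_iff_isClosed.1 <|
      isPreconnected_connectedComponentIn.closure.subset_connectedComponentIn
        (subset_closure (mem_connectedComponentIn hx))
        (closure_minimal (connectedComponentIn_subset _ _) hF)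
  · rw [connectedComponentIn_eq_empty hx]
    exact isClosed_empty

theorem IsCompact.connectedComponentIn [T2Space X] {F : Set X} (hF : IsCompact F) (x : X) :
    IsCompact (connectedComponentIn F x) :=
  hF.of_isClosed_subset (hF.isClosed.connectedComponentIn x) (connectedComponentIn_subset _ _)

/-- A separation of the intersection by disjoint open sets already separates some member of the
family, by compactness. -/
theorem isPreconnected_iInter_of_directed [T4Space X] {ι : Type*} [Nonempty ι]
    {D : ι → Set X} (hD : Directed (· ⊇ ·) D) (hcpt : ∀ i, IsCompact (D i))
    (hconn : ∀ i, IsPreconnected (D i)) : IsPreconnected (⋂ i, D i) := by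
  rw [isPreconnected_iff_subset_of_fully_disjoint_closed
    (isClosed_iInter fun i => (hcpt i).isClosed)]
  intro u v hu hv huv hdisj
  obtain ⟨U, V, hU, hV, huU, hvV, hUV⟩ := normal_separation hu hv hdisj
  obtain ⟨i, hi⟩ := exists_subset_nhds_of_isCompact hD hcpt fun x hx =>
    (hU.union hV).mem_nhds ((huv hx).imp (@huU x) (@hvV x))
  have hsub : (⋂ j, D j) ⊆ D i := iInter_subset D i
  refine ((hconn i).subset_or_subset hU hV hUV hi).imp (fun hDU x hx => ?_) (fun hDV x hx => ?_)
  · exact (huv hx).resolve_right fun hxv => hUV.ne_of_mem (hDU (hsub hx)) (hvV hxv) rfl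
  · exact (huv hx).resolve_left fun hxu => hUV.ne_of_mem (huU hxu) (hDV (hsub hx)) rfl

theorem image_iInter_of_directed [T2Space X] {Y : Type*} [TopologicalSpace Y] [T1Space Y]
    {ι : Type*} [Nonempty ι] {D : ι → Set X} (hD : Directed (· ⊇ ·) D)
    (hcpt : ∀ i, IsCompact (D i)) {f : X → Y} (hf : Continuous f) :
    f '' ⋂ i, D i = ⋂ i, f '' D i := by
  refine (image_iInter_subset _ _).antisymm fun y hy => ?_
  have hfib : IsClosed (f ⁻¹' {y}) := isClosed_singleton.preimage hf
  obtain ⟨x, hx⟩ := IsCompact.nonempty_iInter_of_directed_nonempty_isCompact_isClosed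
    (fun i => D i ∩ f ⁻¹' {y}) (fun i j => (hD i j).imp fun _ hk =>
      ⟨inter_subset_inter_left _ hk.1, inter_subset_inter_left _ hk.2⟩)
    (fun i => mem_iInter.1 hy i) (fun i => (hcpt i).inter_right hfib)
    (fun i => (hcpt i).isClosed.inter hfib)
  simp only [mem_iInter, mem_inter_iff, mem_preimage, mem_singleton_iff] at hx
  exact ⟨x, mem_iInter.2 fun i => (hx i).1, (hx (Classical.arbitrary ι)).2⟩

end Topology

abbrev unitSquare : Set (ℝ × ℝ) := Icc (0:ℝ) 1 ×ˢ Icc (0:ℝ) 1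

theorem isCompact_unitSquare : IsCompact unitSquare := isCompact_Icc.prod isCompact_Icc

theorem convex_unitSquare : Convex ℝ unitSquare := (convex_Icc 0 1).prod (convex_Icc 0 1)

theorem CoversBoth.nonempty {E : Set (ℝ × ℝ)} (h : CoversBoth E) : E.Nonempty := by
  obtain ⟨z, hz, -⟩ : (0:ℝ) ∈ Prod.fst '' E := h.1 ▸ left_mem_Icc.2 zero_le_one
  exact ⟨z, hz⟩

theorem CoversBoth.mono {E S : Set (ℝ × ℝ)} (h : CoversBoth E) (hES : E ⊆ S)
    (hS : S ⊆ unitSquare) : CoversBoth S := by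
  refine ⟨subset_antisymm ?_ (h.1 ▸ image_mono hES), subset_antisymm ?_ (h.2 ▸ image_mono hES)⟩
  · rintro _ ⟨z, hz, rfl⟩
    exact (hS hz).1
  · rintro _ ⟨z, hz, rfl⟩
    exact (hS hz).2

theorem coversBoth_iInter_of_directed {ι : Type*} [Nonempty ι] {D : ι → Set (ℝ × ℝ)}
    (hD : Directed (· ⊇ ·) D) (hcpt : ∀ i, IsCompact (D i)) (hcov : ∀ i, CoversBoth (D i)) :
    CoversBoth (⋂ i, D i) := by
  constructor
  · simp only [image_iInter_of_directed hD hcpt continuous_fst, fun i => (hcov i).1, iInter_const]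
  · simp only [image_iInter_of_directed hD hcpt continuous_snd, fun i => (hcov i).2, iInter_const]

theorem exists_components_ncard_le_one_iff {F : Set (ℝ × ℝ)} :
    (∃ S : Set (Set (ℝ × ℝ)), (∀ c ∈ S, IsComponentOf F c) ∧ S.Finite ∧ S.ncard ≤ 1 ∧
      CoversBoth (⋃₀ S)) ↔ ∃ c, IsComponentOf F c ∧ CoversBoth c := by
  constructor
  · rintro ⟨S, hS, hfin, hcard, hcov⟩
    obtain rfl | ⟨c, rfl⟩ := (ncard_le_one_iff_eq hfin).1 hcard
    · simpa using hcov.nonempty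
    · exact ⟨c, hS c rfl, by simpa using hcov⟩
  · rintro ⟨c, hc, hcov⟩
    exact ⟨{c}, by simpa using hc, finite_singleton c, (ncard_singleton c).le, by simpa using hcov⟩

def clamp (s : ℝ) : ℝ := projIcc 0 1 zero_le_one s

theorem clamp_of_mem {s : ℝ} (hs : s ∈ Icc (0:ℝ) 1) : clamp s = s := by
  simp [clamp, projIcc_of_mem _ hs]

theorem clamp_mem (s : ℝ) : clamp s ∈ Icc (0:ℝ) 1 := Subtype.mem _

theorem continuous_clamp : Continuous clamp := continuous_subtype_val.comp continuous_projIcc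

theorem isReparam_clamp_comp {g : ℝ → ℝ} (hg : ContinuousOn g (Icc 0 1))
    (h0 : (0:ℝ) ∈ g '' Icc 0 1) (h1 : (1:ℝ) ∈ g '' Icc 0 1) : IsReparam (clamp ∘ g) := by
  refine ⟨continuous_clamp.comp_continuousOn hg, subset_antisymm ?_ fun s hs => ?_⟩
  · rintro _ ⟨t, -, rfl⟩
    exact clamp_mem (g t)
  obtain ⟨t, ht, rfl⟩ := (isPreconnected_Icc.image g hg).Icc_subset h0 h1 hs
  exact ⟨t, ht, clamp_of_mem hs⟩

section FreeSpace

variable {d : ℕ} {P Q : ℝ → EuclideanSpace ℝ (Fin d)}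

def clampedDist (P Q : ℝ → EuclideanSpace ℝ (Fin d)) (z : ℝ × ℝ) : ℝ :=
  ‖P (clamp z.1) - Q (clamp z.2)‖

theorem continuous_clampedDist (hP : ContinuousOn P (Icc 0 1)) (hQ : ContinuousOn Q (Icc 0 1)) :
    Continuous (clampedDist P Q) :=
  ((hP.comp_continuous (continuous_clamp.comp continuous_fst) fun z => clamp_mem z.1).sub
    (hQ.comp_continuous (continuous_clamp.comp continuous_snd) fun z => clamp_mem z.2)).norm

theorem mem_freeSpace_iff {ε : ℝ} {z : ℝ × ℝ} :
    z ∈ freeSpace d P Q ε ↔ z ∈ unitSquare ∧ clampedDist P Q z ≤ ε :=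
  and_congr_right fun hz => by rw [clampedDist, clamp_of_mem hz.1, clamp_of_mem hz.2]

theorem freeSpace_subset {ε : ℝ} : freeSpace d P Q ε ⊆ unitSquare := fun _ hz => hz.1

theorem freeSpace_mono {ε ε' : ℝ} (h : ε ≤ ε') : freeSpace d P Q ε ⊆ freeSpace d P Q ε' :=
  fun _ hz => ⟨hz.1, hz.2.trans h⟩

theorem iInter_freeSpace_add (ε : ℝ) :
    ⋂ η : Ioi (0:ℝ), freeSpace d P Q (ε + η) = freeSpace d P Q ε := by
  ext z
  simp only [mem_iInter, Subtype.forall, mem_Ioi]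
  refine ⟨fun h => ⟨(h 1 one_pos).1, le_of_forall_pos_le_add fun η hη => (h η hη).2⟩,
    fun h η hη => freeSpace_mono (by linarith) h⟩

theorem isCompact_freeSpace (hP : ContinuousOn P (Icc 0 1)) (hQ : ContinuousOn Q (Icc 0 1))
    (ε : ℝ) : IsCompact (freeSpace d P Q ε) := by
  rw [show freeSpace d P Q ε = unitSquare ∩ clampedDist P Q ⁻¹' Iic ε from
    ext fun _ => mem_freeSpace_iff]
  exact isCompact_unitSquare.inter_right
    (isClosed_Iic.preimage (continuous_clampedDist hP hQ))

theorem weakFrechetDist_nonneg : 0 ≤ weakFrechetDist d P Q :=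
  Real.sInf_nonneg <| by
    rintro r ⟨σ, τ, -, -, rfl⟩
    exact Real.iSup_nonneg fun t => norm_nonneg _

theorem weakFrechetDist_le_of_forall_le {σ τ : ℝ → ℝ} (hσ : IsReparam σ) (hτ : IsReparam τ)
    {r : ℝ} (h : ∀ t ∈ Icc (0:ℝ) 1, ‖P (σ t) - Q (τ t)‖ ≤ r) : weakFrechetDist d P Q ≤ r := by
  have : Nonempty (Icc (0:ℝ) 1) := ⟨⟨0, left_mem_Icc.2 zero_le_one⟩⟩
  unfold weakFrechetDist
  refine le_trans (csInf_le ⟨0, ?_⟩ ⟨σ, τ, hσ, hτ, rfl⟩) (ciSup_le fun t => h t t.2)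
  rintro r ⟨σ, τ, -, -, rfl⟩
  exact Real.iSup_nonneg fun t => norm_nonneg _

theorem exists_isReparam_of_weakFrechetDist_lt (hP : ContinuousOn P (Icc 0 1))
    (hQ : ContinuousOn Q (Icc 0 1)) {r : ℝ} (h : weakFrechetDist d P Q < r) :
    ∃ σ τ : ℝ → ℝ, IsReparam σ ∧ IsReparam τ ∧ ∀ t ∈ Icc (0:ℝ) 1, ‖P (σ t) - Q (τ t)‖ < r := by
  unfold weakFrechetDist at h
  obtain ⟨_, ⟨σ, τ, hσ, hτ, rfl⟩, hlt⟩ := exists_lt_of_csInf_lt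
    (by exact ⟨_, id, id, ⟨continuousOn_id, image_id _⟩, ⟨continuousOn_id, image_id _⟩, rfl⟩) h
  have hcont : ContinuousOn (fun t => ‖P (σ t) - Q (τ t)‖) (Icc 0 1) :=
    ((hP.comp hσ.1 ((mapsTo_image σ _).mono_right hσ.2.subset)).sub
      (hQ.comp hτ.1 ((mapsTo_image τ _).mono_right hτ.2.subset))).norm
  have hbdd : BddAbove (range fun t : Icc (0:ℝ) 1 => ‖P (σ t) - Q (τ t)‖) :=
    (isCompact_Icc.bddAbove_image hcont).mono (range_subset_iff.2 fun t =>
      mem_image_of_mem (fun t => ‖P (σ t) - Q (τ t)‖) t.2)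
  exact ⟨σ, τ, hσ, hτ, fun t ht => (le_ciSup hbdd ⟨t, ht⟩).trans_lt hlt⟩

theorem weakFrechetDist_le_of_isPreconnected (hP : ContinuousOn P (Icc 0 1))
    (hQ : ContinuousOn Q (Icc 0 1)) {ε : ℝ} {E : Set (ℝ × ℝ)} (hE : IsPreconnected E)
    (hEF : E ⊆ freeSpace d P Q ε) (hcov : CoversBoth E) : weakFrechetDist d P Q ≤ ε := by
  refine le_of_forall_pos_le_add fun η hη => ?_
  set U := {z | clampedDist P Q z < ε + η}
  have hU : IsOpen U := isOpen_lt (continuous_clampedDist hP hQ) continuous_const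
  have hEU : E ⊆ U := fun z hz =>
    lt_of_le_of_lt (mem_freeSpace_iff.1 (hEF hz)).2 (by linarith)
  obtain ⟨a, haE, ha⟩ : (0:ℝ) ∈ Prod.fst '' E := hcov.1 ▸ left_mem_Icc.2 zero_le_one
  obtain ⟨b, hbE, hb⟩ : (1:ℝ) ∈ Prod.fst '' E := hcov.1 ▸ right_mem_Icc.2 zero_le_one
  obtain ⟨p, hpE, hp⟩ : (0:ℝ) ∈ Prod.snd '' E := hcov.2 ▸ left_mem_Icc.2 zero_le_one
  obtain ⟨q, hqE, hq⟩ : (1:ℝ) ∈ Prod.snd '' E := hcov.2 ▸ right_mem_Icc.2 zero_le_one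
  set W := connectedComponentIn U a
  have hW : IsPathConnected W := hU.connectedComponentIn.isConnected_iff_isPathConnected.1
    (isConnected_connectedComponentIn_iff.2 (hEU haE))
  have hEW : E ⊆ W := hE.subset_connectedComponentIn haE hEU
  obtain ⟨γ, hγW, hγ⟩ := hW.exists_path_through_family ![a, b, p, q] fun i => hEW <| by
    fin_cases i <;> assumption
  have himage : γ.extend '' Icc 0 1 = range γ := γ.image_extend_of_subset subset_rfl
  have hmem : ∀ z ∈ range γ, ∀ π : ℝ × ℝ → ℝ, π z ∈ (π ∘ γ.extend) '' Icc 0 1 :=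
    fun z hz π => by rw [image_comp, himage]; exact mem_image_of_mem π hz
  have hσ := isReparam_clamp_comp (g := fun t => (γ.extend t).1)
    (continuous_fst.comp γ.continuous_extend).continuousOn
    (ha ▸ hmem a (hγ 0) Prod.fst) (hb ▸ hmem b (hγ 1) Prod.fst)
  have hτ := isReparam_clamp_comp (g := fun t => (γ.extend t).2)
    (continuous_snd.comp γ.continuous_extend).continuousOn
    (hp ▸ hmem p (hγ 2) Prod.snd) (hq ▸ hmem q (hγ 3) Prod.snd)
  refine weakFrechetDist_le_of_forall_le hσ hτ fun t ht => le_of_lt ?_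
  exact connectedComponentIn_subset U a (hγW (himage ▸ mem_image_of_mem γ.extend ht))

theorem exists_isPreconnected_of_weakFrechetDist_lt (hP : ContinuousOn P (Icc 0 1))
    (hQ : ContinuousOn Q (Icc 0 1)) {r : ℝ} (h : weakFrechetDist d P Q < r) :
    ∃ E, IsPreconnected E ∧ E ⊆ freeSpace d P Q r ∧ CoversBoth E := by
  obtain ⟨σ, τ, hσ, hτ, hlt⟩ := exists_isReparam_of_weakFrechetDist_lt hP hQ h
  refine ⟨(fun t => (σ t, τ t)) '' Icc 0 1, isPreconnected_Icc.image _ (hσ.1.prodMk hτ.1), ?_,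
    by rw [← image_comp]; exact hσ.2, by rw [← image_comp]; exact hτ.2⟩
  rintro _ ⟨t, ht, rfl⟩
  exact ⟨⟨hσ.2 ▸ mem_image_of_mem σ ht, hτ.2 ▸ mem_image_of_mem τ ht⟩, (hlt t ht).le⟩

/-- Near a cluster point `xb` of points `x i ∈ E i`, a small convex neighbourhood of `xb` in the
square joins some `E i` to `xb` inside `F_{ε+η}`. -/
theorem coversBoth_connectedComponentIn_of_mapClusterPt (hP : ContinuousOn P (Icc 0 1))
    (hQ : ContinuousOn Q (Icc 0 1)) {ε : ℝ} {ι : Type*} {l : Filter ι} {E : ι → Set (ℝ × ℝ)}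
    {x : ι → ℝ × ℝ} {xb : ℝ × ℝ} (hx : ∀ i, x i ∈ E i) (hE : ∀ i, IsPreconnected (E i))
    (hcov : ∀ i, CoversBoth (E i))
    (hsmall : ∀ η > 0, ∀ᶠ i in l, E i ⊆ freeSpace d P Q (ε + η)) (hxb : MapClusterPt xb l x)
    {η : ℝ} (hη : 0 < η) : CoversBoth (connectedComponentIn (freeSpace d P Q (ε + η)) xb) := by
  have hxbF : xb ∈ freeSpace d P Q (ε + η / 2) :=
    (isCompact_freeSpace hP hQ _).isClosed.mem_of_mapClusterPt hxb
      ((hsmall _ (half_pos hη)).mono fun i hi => hi (hx i))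
  rw [mem_freeSpace_iff] at hxbF
  obtain ⟨r, hr, hball⟩ : ∃ r > 0, ball xb r ⊆ {z | clampedDist P Q z < ε + η} :=
    isOpen_iff.1 (isOpen_lt (continuous_clampedDist hP hQ) continuous_const) xb
      (lt_of_le_of_lt hxbF.2 (by linarith))
  have hB : ball xb r ∩ unitSquare ⊆ freeSpace d P Q (ε + η) := fun z hz =>
    mem_freeSpace_iff.2 ⟨hz.2, (hball hz.1).le⟩
  obtain ⟨i, hiF, hiB⟩ := ((hsmall η hη).and_frequently
    (hxb.frequently (ball_mem_nhds xb hr))).exists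
  have hunion : IsPreconnected (E i ∪ ball xb r ∩ unitSquare) :=
    (hE i).union (x i) (hx i) ⟨hiB, freeSpace_subset (hiF (hx i))⟩
      ((convex_ball xb r).inter convex_unitSquare).isPreconnected
  exact (hcov i).mono (subset_union_left.trans (hunion.subset_connectedComponentIn
      (Or.inr ⟨mem_ball_self hr, hxbF.1⟩) (union_subset hiF hB)))
    ((connectedComponentIn_subset _ _).trans freeSpace_subset)

theorem exists_isPreconnected_of_forall_pos (hP : ContinuousOn P (Icc 0 1))
    (hQ : ContinuousOn Q (Icc 0 1)) {ε : ℝ}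
    (h : ∀ η > 0, ∃ E, IsPreconnected E ∧ E ⊆ freeSpace d P Q (ε + η) ∧ CoversBoth E) :
    ∃ C, IsPreconnected C ∧ C ⊆ freeSpace d P Q ε ∧ CoversBoth C := by
  choose E hE hEF hcov using fun n : ℕ => h (1 / (n + 1)) Nat.one_div_pos_of_nat
  choose x hx using fun n => (hcov n).nonempty
  obtain ⟨xb, -, hxb⟩ := isCompact_unitSquare.exists_mapClusterPt
    (f := atTop) (u := x) (tendsto_principal.2 (Eventually.of_forall fun n =>
      freeSpace_subset (hEF n (hx n))))
  have hsmall : ∀ η > 0, ∀ᶠ n in atTop, E n ⊆ freeSpace d P Q (ε + η) := fun η hη =>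
    (tendsto_one_div_add_atTop_nhds_zero_nat.eventually (gt_mem_nhds hη)).mono fun n hn =>
      (hEF n).trans (freeSpace_mono (by linarith))
  set D : Ioi (0:ℝ) → Set (ℝ × ℝ) := fun η => connectedComponentIn (freeSpace d P Q (ε + η)) xb
  have hD : Directed (· ⊇ ·) D := Monotone.directed_ge fun η η' hle =>
    connectedComponentIn_mono _ (freeSpace_mono (by simpa using hle))
  have hDcpt : ∀ η, IsCompact (D η) := fun η =>
    (isCompact_freeSpace hP hQ _).connectedComponentIn xb
  refine ⟨⋂ η, D η, isPreconnected_iInter_of_directed hD hDcpt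
    fun _ => isPreconnected_connectedComponentIn, ?_, coversBoth_iInter_of_directed hD hDcpt
    fun η => coversBoth_connectedComponentIn_of_mapClusterPt hP hQ hx hE hcov hsmall hxb η.2⟩
  rw [← iInter_freeSpace_add]
  exact iInter_mono fun η => connectedComponentIn_subset _ _

theorem exists_component_coversBoth_iff (hP : ContinuousOn P (Icc 0 1))
    (hQ : ContinuousOn Q (Icc 0 1)) (ε : ℝ) :
    (∃ c, IsComponentOf (freeSpace d P Q ε) c ∧ CoversBoth c) ↔ weakFrechetDist d P Q ≤ ε := by
  constructor
  · rintro ⟨_, ⟨x, -, rfl⟩, hcov⟩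
    exact weakFrechetDist_le_of_isPreconnected hP hQ isPreconnected_connectedComponentIn
      (connectedComponentIn_subset _ _) hcov
  · intro hle
    obtain ⟨C, hC, hCF, hcov⟩ := exists_isPreconnected_of_forall_pos hP hQ fun η hη =>
      exists_isPreconnected_of_weakFrechetDist_lt hP hQ (by linarith)
    obtain ⟨x, hx⟩ := hcov.nonempty
    exact ⟨_, ⟨x, hCF hx, rfl⟩, hcov.mono (hC.subset_connectedComponentIn hx hCF)
      ((connectedComponentIn_subset _ _).trans freeSpace_subset)⟩

end FreeSpace

/-- For polygonal curves, the 1-Fréchet distance equals the weak Fréchet distance;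
equivalently, for every `ε ≥ 0` a single connected component of `F_ε(P,Q)` covers
both parameter spaces if and only if `δ_wF(P,Q) ≤ ε`. -/
theorem oneFrechet_eq_weakFrechet
    (d n m : ℕ) (P Q : ℝ → EuclideanSpace ℝ (Fin d))
    (hP : IsPolygonal d n P) (hQ : IsPolygonal d m Q) :
    kFrechetDist d 1 P Q = weakFrechetDist d P Q ∧
    ∀ ε : ℝ, 0 ≤ ε →
      ((∃ c : Set (ℝ × ℝ), IsComponentOf (freeSpace d P Q ε) c ∧ CoversBoth c) ↔
        weakFrechetDist d P Q ≤ ε) := by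
  have key := exists_component_coversBoth_iff hP.1 hQ.1
  refine ⟨?_, fun ε _ => key ε⟩
  have hset : {ε : ℝ | 0 ≤ ε ∧ ∃ S : Set (Set (ℝ × ℝ)),
      (∀ c ∈ S, IsComponentOf (freeSpace d P Q ε) c) ∧ S.Finite ∧ S.ncard ≤ 1 ∧
      CoversBoth (⋃₀ S)} = Ici (weakFrechetDist d P Q) := by
    ext ε
    simp only [mem_ofPred_eq, exists_components_ncard_le_one_iff, key, mem_Ici]
    exact ⟨And.right, fun h => ⟨weakFrechetDist_nonneg.trans h, h⟩⟩
  rw [kFrechetDist, hset, csInf_Ici]
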